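/- arXiv:2307.13307 — 2 statements merged into one kernel-verified Lean document; each statement's English description precedes it below -/
import Mathlib

section
/- Let d1, d2, σ, μ1, μ2 be positive reals with d2 < d1·σ² and μ1 < μ2 < μ1·(2 − d2/(d1·σ²)). Define λ2 = sqrt((μ2 − μ1)/(d1·σ² − d2)) and λ1 = σ·λ2. Then λ1 < sqrt(μ1/d1) and λ2 < sqrt(μ2/d2). -/
theorem stmt0 (d1 d2 σ μ1 μ2 : ℝ)
    (hd1 : 0 < d1) (hd2 : 0 < d2) (hσ : 0 < σ) (hμ1 : 0 < μ1) (hμ2 : 0 < μ2)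
    (hlt : d2 < d1 * σ ^ 2) (h12 : μ1 < μ2) (h21 : μ2 < μ1 * (2 - d2 / (d1 * σ ^ 2)))
    (lam2 : ℝ) (hlam2 : lam2 = Real.sqrt ((μ2 - μ1) / (d1 * σ ^ 2 - d2)))
    (lam1 : ℝ) (hlam1 : lam1 = σ * lam2) :
    lam1 < Real.sqrt (μ1 / d1) ∧ lam2 < Real.sqrt (μ2 / d2) := by
  have hA : 0 < d1 * σ ^ 2 - d2 := by linarith
  have hD : 0 < d1 * σ ^ 2 := by positivity
  have hc : d2 / (d1 * σ ^ 2) * (d1 * σ ^ 2) = d2 := div_mul_cancel₀ _ (ne_of_gt hD)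
  have h21' : μ2 * (d1 * σ ^ 2) < μ1 * (2 * (d1 * σ ^ 2) - d2) := by nlinarith
  have hq : 0 ≤ (μ2 - μ1) / (d1 * σ ^ 2 - d2) := div_nonneg (by linarith) hA.le
  have h1 : σ ^ 2 * ((μ2 - μ1) / (d1 * σ ^ 2 - d2)) < μ1 / d1 := by
    rw [mul_div_assoc', div_lt_div_iff₀ hA hd1]
    nlinarith
  have h2 : (μ2 - μ1) / (d1 * σ ^ 2 - d2) < μ2 / d2 := by
    rw [div_lt_div_iff₀ hA hd2]
    nlinarith
  constructor
  · have : lam1 = Real.sqrt (σ ^ 2 * ((μ2 - μ1) / (d1 * σ ^ 2 - d2))) := by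
      rw [hlam1, hlam2, Real.sqrt_mul (sq_nonneg σ), Real.sqrt_sq hσ.le]
    rw [this]
    exact Real.sqrt_lt_sqrt (by positivity) h1
  · rw [hlam2]
    exact Real.sqrt_lt_sqrt hq h2
end

section
/- Let d > 0 and let f : ℝ → ℝ be C¹ with f > 0 on (0, K) and f < 0 on (K, +∞) for some K > 0. If p : ℝ → ℝ is a bounded C² solution of d·p'' + f(p) = 0 on ℝ with inf p ≥ η for some η > 0, then p ≡ K. -/
/-!
Where `p > K` the equation gives `p'' = -f(p)/d > 0`, and where `p < K` (as `p ≥ η > 0`) it gives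
`p'' < 0`. A function bounded above that is strictly convex wherever it exceeds a level `a` never
exceeds it: from a point above `a` where, after the reflection `x ↦ -x`, `q' ≥ 0`, the function
cannot come back down to `a`, so it is convex on a half-line with positive slope somewhere and hence
unbounded. Applied to `p` and `-p` this gives `K ≤ p ≤ K`.
-/

open Set Topology

section ConvexAboveLevel

variable {q : ℝ → ℝ} {a : ℝ}

lemma deriv_deriv_comp_neg (q : ℝ → ℝ) (x : ℝ) :
    deriv (deriv fun y ↦ q (-y)) x = deriv (deriv q) (-x) := by
  have h : (deriv fun y ↦ q (-y)) = fun y ↦ -deriv q (-y) := funext (deriv_comp_neg q)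
  rw [h, deriv.fun_neg, deriv_comp_neg, neg_neg]

/-- Real induction on `{y | q x₀ ≤ q y ∧ 0 ≤ q' y}`: it is closed, and open to the right because `q`
is convex near each of its points. -/
lemma le_of_deriv2_pos_of_deriv_nonneg (hq : Differentiable ℝ q)
    (hq' : Differentiable ℝ (deriv q)) (hconv : ∀ x, a < q x → 0 < deriv (deriv q) x)
    {x₀ x : ℝ} (hx₀ : a < q x₀) (hd : 0 ≤ deriv q x₀) (hx : x₀ ≤ x) : q x₀ ≤ q x := by
  set s := {y | q x₀ ≤ q y ∧ 0 ≤ deriv q y}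
  have hs : IsClosed s :=
    (isClosed_le continuous_const hq.continuous).inter (isClosed_le continuous_const hq'.continuous)
  refine ((hs.inter isClosed_Icc).Icc_subset_of_forall_mem_nhdsWithin ⟨le_rfl, hd⟩ ?_
    ⟨hx, le_rfl⟩).1
  rintro y ⟨⟨hqy, hdy⟩, -⟩
  have habove : {z | a < q z} ∈ 𝓝[>] y := mem_nhdsWithin_of_mem_nhds <|
    (isOpen_lt continuous_const hq.continuous).mem_nhds (hx₀.trans_le hqy)
  obtain ⟨u, hu, hsub⟩ := mem_nhdsGT_iff_exists_Ioo_subset.1 habove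
  have hy : y ∈ Ico y u := left_mem_Ico.2 hu
  have hint : interior (Ico y u) = Ioo y u := interior_Ico
  have hmono' : MonotoneOn (deriv q) (Ico y u) :=
    monotoneOn_of_deriv_nonneg (convex_Ico y u) hq'.continuous.continuousOn hq'.differentiableOn
      fun z hz ↦ (hconv z (hsub (hint ▸ hz))).le
  have hmono : MonotoneOn q (Ico y u) :=
    monotoneOn_of_deriv_nonneg (convex_Ico y u) hq.continuous.continuousOn hq.differentiableOn
      fun z hz ↦ hdy.trans <| hmono' hy (interior_subset hz) (hint ▸ hz).1.le
  refine mem_nhdsGT_iff_exists_Ioo_subset.2 ⟨u, hu, fun z hz ↦ ?_⟩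
  exact ⟨hqy.trans (hmono hy (Ioo_subset_Ico_self hz) hz.1.le),
    hdy.trans (hmono' hy (Ioo_subset_Ico_self hz) hz.1.le)⟩

lemma not_bddAbove_range_of_monotoneOn_deriv (hq : Differentiable ℝ q) {c : ℝ}
    (hmono : MonotoneOn (deriv q) (Ici c)) (hc : 0 < deriv q c) : ¬BddAbove (range q) := by
  refine not_bddAbove_iff.2 fun B ↦ ?_
  set y := c + (max B (q c) - q c + 1) / deriv q c
  have hcy : c ≤ y := le_add_of_nonneg_right (div_nonneg (by linarith [le_max_right B (q c)]) hc.le)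
  have hgrowth : deriv q c * (y - c) ≤ q y - q c :=
    (convex_Ici c).mul_sub_le_image_sub_of_le_deriv hq.continuous.continuousOn
      hq.differentiableOn (fun x hx ↦ hmono self_mem_Ici (interior_subset hx) (interior_subset hx))
      c self_mem_Ici y hcy hcy
  have : deriv q c * (y - c) = max B (q c) - q c + 1 := by
    simp only [y, add_sub_cancel_left]; field_simp
  exact ⟨q y, mem_range_self y, by linarith [le_max_left B (q c)]⟩

lemma le_of_bddAbove_range_of_deriv2_pos (hq : Differentiable ℝ q)
    (hq' : Differentiable ℝ (deriv q)) (hB : BddAbove (range q))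
    (hconv : ∀ x, a < q x → 0 < deriv (deriv q) x) (x : ℝ) : q x ≤ a := by
  by_contra! hx
  wlog hd : 0 ≤ deriv q x generalizing q x
  · have hderiv : (deriv fun y ↦ q (-y)) = fun y ↦ -deriv q (-y) := funext (deriv_comp_neg q)
    refine this (q := fun y ↦ q (-y)) (hq.comp differentiable_neg) ?_
      (hB.mono (range_comp_subset_range _ q)) (fun y hy ↦ ?_) (-x) (by rwa [neg_neg]) ?_
    · exact hderiv ▸ (hq'.comp differentiable_neg).neg
    · exact deriv_deriv_comp_neg q y ▸ hconv _ hy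
    · rw [deriv_comp_neg, neg_neg]
      linarith
  have habove : ∀ y ∈ Ici x, a < q y := fun y hy ↦
    hx.trans_le (le_of_deriv2_pos_of_deriv_nonneg hq hq' hconv hx hd hy)
  have hmono : StrictMonoOn (deriv q) (Ici x) :=
    strictMonoOn_of_deriv_pos (convex_Ici x) hq'.continuous.continuousOn
      fun y hy ↦ hconv y (habove y (interior_subset hy))
  refine not_bddAbove_range_of_monotoneOn_deriv hq
    (hmono.monotoneOn.mono (Ici_subset_Ici.2 (lt_add_one x).le)) ?_ hB
  exact hd.trans_lt (hmono self_mem_Ici (mem_Ici.2 (lt_add_one x).le) (lt_add_one x))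

end ConvexAboveLevel

theorem stmt10_general (d K η : ℝ) (hd : 0 < d) (hη : 0 < η)
    (f : ℝ → ℝ)
    (hfpos : ∀ s ∈ Set.Ioo 0 K, 0 < f s)
    (hfneg : ∀ s ∈ Set.Ioi K, f s < 0)
    (p : ℝ → ℝ) (hp : ContDiff ℝ 2 p)
    (hbdd : ∃ B : ℝ, ∀ x : ℝ, |p x| ≤ B)
    (heq : ∀ x : ℝ, d * deriv (deriv p) x + f (p x) = 0)
    (hinf : ∀ x : ℝ, η ≤ p x) :
    ∀ x : ℝ, p x = K := by
  obtain ⟨B, hB⟩ := hbdd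
  have hp' : Differentiable ℝ (deriv p) := hp.differentiable_deriv_two
  have hdd : ∀ x, deriv (deriv p) x = -f (p x) / d := fun x ↦ by
    field_simp
    linarith [heq x]
  have hle : ∀ x, p x ≤ K :=
    le_of_bddAbove_range_of_deriv2_pos (hp.differentiable two_ne_zero) hp'
      ⟨B, forall_mem_range.2 fun x ↦ (abs_le.1 (hB x)).2⟩
      fun x hx ↦ hdd x ▸ div_pos (neg_pos.2 (hfneg _ hx)) hd
  have hge : ∀ x, -p x ≤ -K :=
    le_of_bddAbove_range_of_deriv2_pos (q := fun x ↦ -p x) (hp.differentiable two_ne_zero).neg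
      (by rw [deriv.fun_neg']; exact hp'.neg)
      ⟨B, forall_mem_range.2 fun x ↦ neg_le.1 (abs_le.1 (hB x)).1⟩
      fun x hx ↦ by
        rw [deriv.fun_neg', deriv.fun_neg, hdd, neg_div, neg_neg]
        exact div_pos (hfpos _ ⟨hη.trans_le (hinf x), neg_lt_neg_iff.1 hx⟩) hd
  exact fun x ↦ le_antisymm (hle x) (neg_le_neg_iff.1 (hge x))

theorem stmt10 (d K η : ℝ) (hd : 0 < d) (hK : 0 < K) (hη : 0 < η)
    (f : ℝ → ℝ) (hf : ContDiff ℝ 1 f)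
    (hfpos : ∀ s ∈ Set.Ioo 0 K, 0 < f s)
    (hfneg : ∀ s ∈ Set.Ioi K, f s < 0)
    (p : ℝ → ℝ) (hp : ContDiff ℝ 2 p)
    (hbdd : ∃ B : ℝ, ∀ x : ℝ, |p x| ≤ B)
    (heq : ∀ x : ℝ, d * deriv (deriv p) x + f (p x) = 0)
    (hinf : ∀ x : ℝ, η ≤ p x) :
    ∀ x : ℝ, p x = K :=
  stmt10_general d K η hd hη f hfpos hfneg p hp hbdd heq hinf
end
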